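/- arXiv:2307.07461 — 3 statements merged into one kernel-verified Lean document; each statement's English description precedes it below -/
import Mathlib

section
/- For every integer n ≥ 1 and every integer k with 1 ≤ k ≤ n-1, the binomial coefficient satisfies binom(n,k) ≤ sqrt(n/(2π·k·(n-k))) · 2^(n·h(k/n)), where h(p) = -p·log₂(p) - (1-p)·log₂(1-p) is the binary entropy function. -/
/-! Write `n! = s n · √(2n) (n/e)^n`, where `s` is the Stirling sequence. Since `s` decreases on
the positive integers, `s n ≤ s k`, and since it decreases to `√π`, `m! ≥ √(2πm) (m/e)^m`.
Dividing, `C(k+m, k) ≤ √((k+m)/(2πkm)) · (k+m)^(k+m) / (k^k m^m)`, and the last factor is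
`2^((k+m) h(k/(k+m)))`. -/

open Real

noncomputable def binEnt (p : ℝ) : ℝ := -p * Real.logb 2 p - (1 - p) * Real.logb 2 (1 - p)

open Nat Stirling

lemma stirlingSeq_le_of_le {i j : ℕ} (hi : i ≠ 0) (hij : i ≤ j) :
    stirlingSeq j ≤ stirlingSeq i := by
  obtain ⟨i, rfl⟩ := Nat.exists_eq_succ_of_ne_zero hi
  obtain ⟨j, rfl⟩ := Nat.exists_eq_succ_of_ne_zero (by omega : j ≠ 0)
  exact stirlingSeq'_antitone (Nat.succ_le_succ_iff.mp hij)

lemma factorial_div_factorial_le_stirling {k n : ℕ} (hk : k ≠ 0) (hkn : k ≤ n) :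
    (n ! : ℝ) / k ! ≤ √(2 * n) * (n / exp 1) ^ n / (√(2 * k) * (k / exp 1) ^ k) := by
  have hk' : (0 : ℝ) < k := by positivity
  have hn' : (0 : ℝ) < n := by exact_mod_cast (by omega : 0 < n)
  have hs := stirlingSeq_le_of_le hk hkn
  rw [stirlingSeq, stirlingSeq, div_le_div_iff₀ (by positivity) (by positivity)] at hs
  rw [div_le_div_iff₀ (by positivity) (by positivity)]
  linarith

lemma add_choose_le_stirling {k m : ℕ} (hk : k ≠ 0) (hm : m ≠ 0) :
    ((k + m).choose k : ℝ) ≤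
      √(2 * (k + m)) * ((k + m) / exp 1) ^ (k + m) /
        (√(2 * k) * (k / exp 1) ^ k) / (√(2 * π * m) * (m / exp 1) ^ m) := by
  rw [Nat.cast_add_choose, ← div_div, ← Nat.cast_add]
  have hm' : (0 : ℝ) < m := by positivity
  gcongr ?_ / ?_
  · exact factorial_div_factorial_le_stirling hk (Nat.le_add_right k m)
  · exact le_factorial_stirling m

lemma stirling_quotient_eq {x y : ℝ} (hx : 0 < x) (hy : 0 < y) (k m : ℕ) :
    √(2 * (x + y)) * ((x + y) / exp 1) ^ (k + m) /
        (√(2 * x) * (x / exp 1) ^ k) / (√(2 * π * y) * (y / exp 1) ^ m) =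
      √((x + y) / (2 * π * x * y)) * ((x + y) ^ (k + m) / (x ^ k * y ^ m)) := by
  rw [show (x + y) / (2 * π * x * y) = 2 * (x + y) / (2 * x * (2 * π * y)) by field_simp,
    sqrt_div' _ (by positivity), sqrt_mul (by positivity : (0 : ℝ) ≤ 2 * x)]
  simp only [div_pow, pow_add]
  field_simp

lemma two_rpow_mul_binEnt {x y : ℝ} (hx : 0 < x) (hy : 0 < y) :
    (2 : ℝ) ^ ((x + y) * binEnt (x / (x + y))) = (x + y) ^ (x + y) / (x ^ x * y ^ y) := by
  have hxy : 0 < x + y := by positivity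
  have h_one_sub : 1 - x / (x + y) = y / (x + y) := by field_simp; ring
  apply log_injOn_pos (Set.mem_Ioi.mpr (by positivity)) (Set.mem_Ioi.mpr (by positivity))
  rw [log_rpow two_pos, log_div (by positivity) (by positivity),
    log_mul (by positivity) (by positivity), log_rpow hxy, log_rpow hx, log_rpow hy,
    binEnt, h_one_sub, logb, logb,
    log_div hx.ne' hxy.ne', log_div hy.ne' hxy.ne']
  field_simp
  ring

theorem binom_upper_bound_general (n k : ℕ) (hk1 : 1 ≤ k) (hk2 : k ≤ n - 1) :
    (n.choose k : ℝ) ≤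
      Real.sqrt ((n : ℝ) / (2 * Real.pi * k * (n - k))) *
        (2 : ℝ) ^ ((n : ℝ) * binEnt ((k : ℝ) / n)) := by
  obtain ⟨m, rfl⟩ : ∃ m, n = k + m := ⟨n - k, by omega⟩
  have hk : k ≠ 0 := by omega
  have hm : m ≠ 0 := by omega
  calc ((k + m).choose k : ℝ) ≤ _ := add_choose_le_stirling hk hm
    _ = _ := by
      push_cast
      rw [stirling_quotient_eq (by positivity) (by positivity), add_sub_cancel_left,
        two_rpow_mul_binEnt (by positivity) (by positivity)]
      norm_cast

theorem binom_upper_bound (n k : ℕ) (hn : 1 ≤ n) (hk1 : 1 ≤ k) (hk2 : k ≤ n - 1) :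
    (n.choose k : ℝ) ≤
      Real.sqrt ((n : ℝ) / (2 * Real.pi * k * (n - k))) *
        (2 : ℝ) ^ ((n : ℝ) * binEnt ((k : ℝ) / n)) :=
  binom_upper_bound_general n k hk1 hk2
end

section
/- Let 0 < α* < 1 and let p be a positive integer satisfying p ≥ ln(24·ln 2/(α*)⁴) / ln(1/α*). Then for every real α with |α| ≤ α* and every ε with 0 < ε ≤ 1, one has -α⁴/(12·ln 2) + 2·(1-ε)²·α^p/(1+α^p) ≤ 0. (Here p is such that 1 + α^p > 0 for all |α| ≤ α* < 1.) -/
set_option maxHeartbeats 1000000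


theorem neg_quartic_dominates (αstar : ℝ) (hα0 : 0 < αstar) (hα1 : αstar < 1)
    (p : ℕ) (hp : 0 < p)
    (hpge : (p : ℝ) ≥ Real.log (24 * Real.log 2 / αstar ^ 4) / Real.log (1 / αstar)) :
    ∀ α : ℝ, |α| ≤ αstar → ∀ ε : ℝ, 0 < ε → ε ≤ 1 →
      -α ^ 4 / (12 * Real.log 2) + 2 * (1 - ε) ^ 2 * α ^ p / (1 + α ^ p) ≤ 0 := by
  have hL : (0:ℝ) < Real.log 2 := Real.log_pos (by norm_num)
  set A : ℝ := 24 * Real.log 2 with hAdef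
  have hA1 : (1:ℝ) < A := by
    have := Real.log_two_gt_d9
    nlinarith
  have hA0 : (0:ℝ) < A := by linarith
  have hs4 : (0:ℝ) < αstar ^ 4 := by positivity
  have hlog : 0 < Real.log (1 / αstar) := Real.log_pos (by
    rw [lt_div_iff₀ hα0]; linarith)
  -- key : A * αstar ^ p ≤ αstar ^ 4
  have hkey : A * αstar ^ p ≤ αstar ^ 4 := by
    have h1 : Real.log (A / αstar ^ 4) ≤ (p : ℝ) * Real.log (1 / αstar) := by
      rw [ge_iff_le, div_le_iff₀ hlog] at hpge
      linarith
    have h2 : Real.log (A / αstar ^ 4) ≤ Real.log ((1 / αstar) ^ p) := by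
      rwa [Real.log_pow]
    have h3 : A / αstar ^ 4 ≤ (1 / αstar) ^ p := by
      have hpos : (0:ℝ) < A / αstar ^ 4 := by positivity
      have := Real.exp_le_exp.2 h2
      rwa [Real.exp_log hpos, Real.exp_log (by positivity)] at this
    have hsp : (0:ℝ) < αstar ^ p := by positivity
    rw [div_pow, one_pow, div_le_div_iff₀ hs4 hsp] at h3
    nlinarith
  have hple : αstar ^ p < 1 := pow_lt_one₀ hα0.le hα1 hp.ne'
  have hp4 : 4 ≤ p := by
    by_contra h
    push_neg at h
    have hle : αstar ^ 4 ≤ αstar ^ p :=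
      pow_le_pow_of_le_one hα0.le hα1.le (by omega)
    have hsp : (0:ℝ) < αstar ^ p := by positivity
    nlinarith
  intro α hαle ε hε0 hε1
  have hαabs : (0:ℝ) ≤ |α| := abs_nonneg α
  -- A * |α|^p ≤ α^4
  have hkey2 : A * |α| ^ p ≤ α ^ 4 := by
    have e1 : |α| ^ p = |α| ^ 4 * |α| ^ (p - 4) := by
      rw [← pow_add]; congr 1; omega
    have e2 : αstar ^ p = αstar ^ 4 * αstar ^ (p - 4) := by
      rw [← pow_add]; congr 1; omega
    have h1 : |α| ^ (p - 4) ≤ αstar ^ (p - 4) := pow_le_pow_left₀ hαabs hαle _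
    have h2 : A * αstar ^ (p - 4) ≤ 1 := by
      rw [e2] at hkey
      have : αstar ^ 4 * (A * αstar ^ (p - 4)) ≤ αstar ^ 4 * 1 := by ring_nf; nlinarith
      exact le_of_mul_le_mul_left this hs4
    have h3 : α ^ 4 = |α| ^ 4 := by
      rw [← abs_pow, abs_of_nonneg (by positivity : (0:ℝ) ≤ α ^ 4)]
    have h4 : (0:ℝ) ≤ |α| ^ 4 := by positivity
    have h5 : A * |α| ^ (p - 4) ≤ 1 := by
      nlinarith [pow_nonneg hαabs (p - 4)]
    rw [e1, h3]
    nlinarith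
  have habs : |α ^ p| ≤ αstar ^ p := by
    rw [abs_pow]; exact pow_le_pow_left₀ hαabs hαle p
  have hden : 0 < 1 + α ^ p := by
    have := abs_le.1 habs
    nlinarith
  rw [div_add_div _ _ (by positivity) hden.ne', div_nonpos_iff]
  right
  constructor
  · rcases le_or_gt (α ^ p) 0 with hneg | hpos
    · have h4 : (0:ℝ) ≤ α ^ 4 := by positivity
      have hsq : (0:ℝ) ≤ (1 - ε) ^ 2 := sq_nonneg _
      nlinarith [mul_nonneg h4 hden.le, mul_nonneg (mul_nonneg hL.le hsq) (neg_nonneg.2 hneg)]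
    · have hle1 : α ^ p ≤ |α| ^ p := by rw [← abs_pow]; exact le_abs_self _
      have hsq1 : (1 - ε) ^ 2 ≤ 1 := by nlinarith
      have hsq0 : (0:ℝ) ≤ (1 - ε) ^ 2 := sq_nonneg _
      -- 2*(1-ε)^2*α^p*(12 L) ≤ α^4*(1+α^p)
      have hAp : A * α ^ p ≤ α ^ 4 := le_trans (by nlinarith) hkey2
      have h4 : (0:ℝ) ≤ α ^ 4 := by positivity
      have t1 : 12 * Real.log 2 * (2 * (1 - ε) ^ 2 * α ^ p) ≤ A * α ^ p := by
        rw [hAdef]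
        nlinarith [mul_pos hL hpos]
      have t2 : α ^ 4 ≤ α ^ 4 * (1 + α ^ p) := by
        nlinarith [mul_nonneg h4 hpos.le]
      linarith
  · exact (mul_pos (by positivity) hden).le
end

section
/- Let A and A+E be symmetric n×n real matrices with eigenvalues λ₁(A) ≥ … ≥ λ_n(A) and λ₁(A+E) ≥ … ≥ λ_n(A+E). Then ∑_{i=1}^n (λ_i(A+E) - λ_i(A))² ≤ ‖E‖_F², where ‖·‖_F is the Frobenius norm. -/
open Matrix Polynomial

/-!
Diagonalize `A = U diag(μ) Uᵀ` and `A + E = V diag(ν) Vᵀ` with orthogonal `U`, `V`; this is possible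
with the eigenvalues in the prescribed order because `μ` and `ν` are, up to a permutation, the
eigenvalues supplied by the spectral theorem. The squared Frobenius norm is orthogonally invariant,
so with `W = Uᵀ V` it equals `‖W diag(ν) - diag(μ) W‖² = ∑ k l, W k l ^ 2 * (ν l - μ k) ^ 2`.
The matrix `(W k l ^ 2)` is doubly stochastic and the last expression is linear in it, so by
Birkhoff's theorem it suffices to bound it at permutation matrices, where the rearrangement
inequality shows that the identity permutation is optimal for similarly ordered `μ` and `ν`.
-/

open Finset

section Rearrangement

variable {ι : Type*} [Fintype ι]

theorem exists_perm_eq_comp_of_map_univ_val_eq {α : Type*} {f g : ι → α}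
    (h : univ.val.map f = univ.val.map g) : ∃ σ : Equiv.Perm ι, f = g ∘ σ := by
  classical
  have hfiber (a : α) : Fintype.card {i // f i = a} = Fintype.card {i // g i = a} := by
    simpa [Fintype.card_subtype, Multiset.count_map, eq_comm, Finset.card_def] using
      congrArg (Multiset.count a) h
  exact ⟨Equiv.ofFiberEquiv fun a => Fintype.equivOfCardEq (hfiber a),
    funext fun i => (Equiv.ofFiberEquiv_map _ i).symm⟩

theorem Monovary.sum_sq_sub_le_sum_sq_sub_comp_perm {f g : ι → ℝ} (hfg : Monovary f g)
    (σ : Equiv.Perm ι) : ∑ i, (g i - f i) ^ 2 ≤ ∑ i, (g (σ i) - f i) ^ 2 := by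
  have hre : ∑ i, f i * g (σ i) ≤ ∑ i, f i * g i := hfg.sum_smul_comp_perm_le_sum_smul
  have hsq : ∑ i, g (σ i) ^ 2 = ∑ i, g i ^ 2 := Equiv.sum_comp σ (fun i => g i ^ 2)
  have hexpand (h : ι → ℝ) :
      ∑ i, (h i - f i) ^ 2 = ∑ i, h i ^ 2 - 2 * ∑ i, f i * h i + ∑ i, f i ^ 2 := by
    rw [mul_sum, ← sum_sub_distrib, ← sum_add_distrib]
    exact sum_congr rfl fun i _ => by ring
  have hexpandσ := hexpand (g ∘ σ)
  simp only [Function.comp_apply, hsq] at hexpandσ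
  rw [hexpand g, hexpandσ]
  linarith

variable [DecidableEq ι]

theorem Monovary.sum_sq_sub_le_of_mem_doublyStochastic {f g : ι → ℝ} (hfg : Monovary f g)
    {S : Matrix ι ι ℝ} (hS : S ∈ doublyStochastic ℝ ι) :
    ∑ i, (g i - f i) ^ 2 ≤ ∑ i, ∑ j, S i j * (g j - f i) ^ 2 := by
  have hlin : IsLinearMap ℝ fun M : Matrix ι ι ℝ => ∑ i, ∑ j, M i j * (g j - f i) ^ 2 := by
    constructor
    · intro M N
      simp [add_mul, sum_add_distrib]
    · intro c M
      simp [mul_assoc, mul_sum]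
  have hperm (σ : Equiv.Perm ι) :
      ∑ i, (g i - f i) ^ 2 ≤ ∑ i, ∑ j, σ.permMatrix ℝ i j * (g j - f i) ^ 2 := by
    simpa [Equiv.Perm.permMatrix, PEquiv.toMatrix_apply] using
      hfg.sum_sq_sub_le_sum_sq_sub_comp_perm σ
  rw [← SetLike.mem_coe, doublyStochastic_eq_convexHull_permMatrix] at hS
  exact convexHull_min (by rintro _ ⟨σ, rfl⟩; exact hperm σ) (convex_halfSpace_ge hlin _) hS

end Rearrangement

namespace Matrix

theorem sum_sq_eq_trace_mul_transpose {m n R : Type*} [Fintype m] [Fintype n]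
    [CommSemiring R] (M : Matrix m n R) : ∑ i, ∑ j, M i j ^ 2 = trace (M * Mᵀ) := by
  simp [trace, mul_apply, sq]

theorem sum_sq_unitary_mul_mul_unitary {m n : Type*} [Fintype m] [Fintype n]
    [DecidableEq m] [DecidableEq n] {U : Matrix m m ℝ} {V : Matrix n n ℝ}
    (hU : U ∈ unitaryGroup m ℝ) (hV : V ∈ unitaryGroup n ℝ) (M : Matrix m n ℝ) :
    ∑ i, ∑ j, (U * M * V) i j ^ 2 = ∑ i, ∑ j, M i j ^ 2 := by
  have hUU : Uᵀ * U = 1 := by simpa [star_eq_conjTranspose] using mem_unitaryGroup_iff'.mp hU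
  have hVV : V * Vᵀ = 1 := by simpa [star_eq_conjTranspose] using mem_unitaryGroup_iff.mp hV
  have hconj : U * M * V * (U * M * V)ᵀ = U * (M * Mᵀ * Uᵀ) := by
    simp only [transpose_mul, Matrix.mul_assoc]
    rw [← Matrix.mul_assoc V, hVV, Matrix.one_mul]
  rw [sum_sq_eq_trace_mul_transpose, sum_sq_eq_trace_mul_transpose, hconj, trace_mul_comm,
    Matrix.mul_assoc, hUU, Matrix.mul_one]

variable {ι : Type*} [Fintype ι] [DecidableEq ι]

theorem of_sq_mem_doublyStochastic {W : Matrix ι ι ℝ} (hW : W ∈ unitaryGroup ι ℝ) :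
    of (fun i j => W i j ^ 2) ∈ doublyStochastic ℝ ι := by
  rw [mem_doublyStochastic_iff_sum]
  refine ⟨fun i j => sq_nonneg _, fun i => ?_, fun j => ?_⟩
  · simpa [mul_apply, sq] using congrFun (congrFun (mem_unitaryGroup_iff.mp hW) i) i
  · simpa [mul_apply, sq] using congrFun (congrFun (mem_unitaryGroup_iff'.mp hW) j) j

theorem sum_sq_sub_unitary_conj_diagonal {U V : Matrix ι ι ℝ}
    (hU : U ∈ unitaryGroup ι ℝ) (hV : V ∈ unitaryGroup ι ℝ) (d d' : ι → ℝ) :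
    ∑ i, ∑ j, (V * diagonal d' * star V - U * diagonal d * star U) i j ^ 2 =
      ∑ k, ∑ l, (star U * V) k l ^ 2 * (d' l - d k) ^ 2 := by
  have hconj : star U * (V * diagonal d' * star V - U * diagonal d * star U) * V =
      star U * V * diagonal d' - diagonal d * (star U * V) := by
    simp only [Matrix.mul_sub, Matrix.sub_mul, Matrix.mul_assoc, mem_unitaryGroup_iff'.mp hV,
      Matrix.mul_one]
    simp only [← Matrix.mul_assoc, mem_unitaryGroup_iff'.mp hU, Matrix.one_mul]
  rw [← sum_sq_unitary_mul_mul_unitary (Unitary.star_mem hU) hV, hconj]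
  simp only [sub_apply, mul_diagonal, diagonal_mul]
  exact sum_congr rfl fun k _ => sum_congr rfl fun l _ => by ring

theorem IsHermitian.exists_unitary_eq_mul_diagonal_mul_star_of_charpoly_eq
    {A : Matrix ι ι ℝ} (hA : A.IsHermitian) {d : ι → ℝ}
    (hd : A.charpoly = ∏ i, (X - C (d i))) :
    ∃ U ∈ unitaryGroup ι ℝ, A = U * diagonal d * star U := by
  obtain ⟨σ, rfl⟩ : ∃ σ : Equiv.Perm ι, d = hA.eigenvalues ∘ σ := by
    apply exists_perm_eq_comp_of_map_univ_val_eq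
    have hroots := hA.roots_charpoly_eq_eigenvalues
    rw [hd, roots_prod _ _ (prod_ne_zero_iff.mpr fun i _ => X_sub_C_ne_zero (d i))] at hroots
    simpa using hroots
  set U : Matrix ι ι ℝ := (hA.eigenvectorUnitary : Matrix ι ι ℝ)
  have hU : U ∈ unitaryGroup ι ℝ := hA.eigenvectorUnitary.2
  refine ⟨U.submatrix id σ, ?_, ?_⟩
  · rw [mem_unitaryGroup_iff, star_eq_conjTranspose, conjTranspose_submatrix,
      submatrix_mul_equiv, ← star_eq_conjTranspose, mem_unitaryGroup_iff.mp hU, submatrix_id_id]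
  · rw [star_eq_conjTranspose, conjTranspose_submatrix, ← submatrix_diagonal_equiv,
      submatrix_mul_equiv, submatrix_mul_equiv, submatrix_id_id, ← star_eq_conjTranspose]
    conv_lhs => rw [hA.spectral_theorem]
    simp [U, Unitary.conjStarAlgAut_apply]

end Matrix

/-- Wielandt–Hoffman inequality: if `μ` and `ν` are the nonincreasing enumerations
(with multiplicity) of the eigenvalues of the symmetric matrices `A` and `A + E`,
then `∑ (ν i - μ i)² ≤ ‖E‖_F²`. -/
theorem wielandt_hoffman {n : ℕ} (A E : Matrix (Fin n) (Fin n) ℝ)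
    (hA : A.IsSymm) (hAE : (A + E).IsSymm)
    (μ ν : Fin n → ℝ) (hμ : Antitone μ) (hν : Antitone ν)
    (hμeig : A.charpoly = ∏ i, (X - C (μ i)))
    (hνeig : (A + E).charpoly = ∏ i, (X - C (ν i))) :
    ∑ i, (ν i - μ i) ^ 2 ≤ ∑ i, ∑ j, (E i j) ^ 2 := by
  obtain ⟨U, hU, hAU⟩ :=
    (isHermitian_iff_isSymm.mpr hA).exists_unitary_eq_mul_diagonal_mul_star_of_charpoly_eq hμeig
  obtain ⟨V, hV, hAEV⟩ :=
    (isHermitian_iff_isSymm.mpr hAE).exists_unitary_eq_mul_diagonal_mul_star_of_charpoly_eq hνeig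
  have hE : E = V * diagonal ν * star V - U * diagonal μ * star U := by
    rw [← hAEV, ← hAU, add_sub_cancel_left]
  rw [hE, sum_sq_sub_unitary_conj_diagonal hU hV]
  exact (hμ.monovary hν).sum_sq_sub_le_of_mem_doublyStochastic
    (of_sq_mem_doublyStochastic (mul_mem (Unitary.star_mem hU) hV))
end
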